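/- arXiv:1208.6158 — 2 statements merged into one kernel-verified Lean document; each statement's English description precedes it below -/
import Mathlib

section
/- Let C^a_{bc} be structure constants of a 3-dimensional Lie algebra that are antisymmetric in the lower indices, let g_{ab}(t) be a smooth curve of positive definite symmetric matrices with k_{ab} = -½ ġ_{ab}, and define R_{ij} = -½ C^l_{ki}(C^k_{lj} + g_{lm}g^{kn}C^m_{nj}) - ¼ C^m_{nk}C^p_{ql} g_{jm} g_{ip} g^{kq} g^{ln}. Then the contraction g^{ji} Ṙ_{ij} = 0, where Ṙ_{ij} denotes the time derivative of R_{ij} (with g fixed-index raising via g^{ab} = (g⁻¹)^{ab} and ġ^{ab} = 2k^{ab}). -/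
private lemma sc {f g : Fin 3 → ℝ} (h : ∀ i, f i = g i) : (∑ i, f i) = ∑ i, g i :=
  Finset.sum_congr rfl fun i _ => h i

private lemma flat6 (f : Fin 3 → Fin 3 → Fin 3 → Fin 3 → Fin 3 → Fin 3 → ℝ) :
    (∑ a, ∑ b, ∑ c, ∑ d, ∑ e, ∑ g, f a b c d e g)
      = ∑ x : Fin 3 × Fin 3 × Fin 3 × Fin 3 × Fin 3 × Fin 3,
          f x.1 x.2.1 x.2.2.1 x.2.2.2.1 x.2.2.2.2.1 x.2.2.2.2.2 := by
  simp [Fintype.sum_prod_type]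

private lemma flat8 (f : Fin 3 → Fin 3 → Fin 3 → Fin 3 → Fin 3 → Fin 3 → Fin 3 → Fin 3 → ℝ) :
    (∑ a, ∑ b, ∑ c, ∑ d, ∑ e, ∑ g, ∑ h, ∑ i, f a b c d e g h i)
      = ∑ x : Fin 3 × Fin 3 × Fin 3 × Fin 3 × Fin 3 × Fin 3 × Fin 3 × Fin 3,
          f x.1 x.2.1 x.2.2.1 x.2.2.2.1 x.2.2.2.2.1 x.2.2.2.2.2.1 x.2.2.2.2.2.2.1 x.2.2.2.2.2.2.2 := by
  simp [Fintype.sum_prod_type]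

private lemma contract (b a : Fin 3 → Fin 3 → ℝ)
    (hba : ∀ i j, (∑ x, b i x * a x j) = if i = j then (1:ℝ) else 0)
    (j : Fin 3) (F : Fin 3 → ℝ) :
    (∑ p, ∑ i, b j i * a i p * F p) = F j := by
  have h1 : ∀ p, (∑ i, b j i * a i p * F p) = (∑ i, b j i * a i p) * F p := by
    intro p; rw [Finset.sum_mul]
  rw [Finset.sum_congr rfl fun p _ => h1 p]
  simp only [hba, ite_mul, one_mul, zero_mul]
  simp

set_option maxHeartbeats 4000000 in
lemma core_alg (C : Fin 3 → Fin 3 → Fin 3 → ℝ) (a b H Bd : Matrix (Fin 3) (Fin 3) ℝ)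
    (hC : ∀ x y z, C x y z = -C x z y)
    (hb : ∀ i j, b i j = b j i)
    (ha : ∀ i j, a i j = a j i)
    (hba : ∀ i j, (∑ x, b i x * a x j) = if i = j then (1:ℝ) else 0) :
    (∑ i, ∑ j, b j i *
      (-(1/2) * (∑ l, ∑ k, C l k i * (∑ m, ∑ n, (H l m * b k n + a l m * Bd k n) * C m n j))
        - 1/4 * (∑ m, ∑ n, ∑ k, ∑ p, ∑ q, ∑ l,
            ((((C m n k * C p q l * H j m) * a i p + (C m n k * C p q l * a j m) * H i p) * b k q
              + (C m n k * C p q l * a j m * a i p) * Bd k q) * b l n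
             + (C m n k * C p q l * a j m * a i p * b k q) * Bd l n)))) = 0 := by
  have h1 : (∑ i, ∑ j, ∑ m, ∑ n, ∑ k, ∑ p, ∑ q, ∑ l, b j i * (1 / 4 * (C m n k * C p q l * a j m * H i p * b k q * b l n))) = (∑ i, ∑ j, ∑ m, ∑ n, ∑ k, ∑ p, ∑ q, ∑ l, b j i * (1 / 4 * (C m n k * C p q l * H j m * a i p * b k q * b l n))) := by
    calc (∑ i, ∑ j, ∑ m, ∑ n, ∑ k, ∑ p, ∑ q, ∑ l, b j i * (1 / 4 * (C m n k * C p q l * a j m * H i p * b k q * b l n)))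
        = ∑ x : Fin 3 × Fin 3 × Fin 3 × Fin 3 × Fin 3 × Fin 3 × Fin 3 × Fin 3, b x.2.1 x.1 * (1 / 4 * (C x.2.2.1 x.2.2.2.1 x.2.2.2.2.1 * C x.2.2.2.2.2.1 x.2.2.2.2.2.2.1 x.2.2.2.2.2.2.2 * a x.2.1 x.2.2.1 * H x.1 x.2.2.2.2.2.1 * b x.2.2.2.2.1 x.2.2.2.2.2.2.1 * b x.2.2.2.2.2.2.2 x.2.2.2.1)) := flat8 _
      _ = ∑ x : Fin 3 × Fin 3 × Fin 3 × Fin 3 × Fin 3 × Fin 3 × Fin 3 × Fin 3, b x.2.1 x.1 * (1 / 4 * (C x.2.2.1 x.2.2.2.1 x.2.2.2.2.1 * C x.2.2.2.2.2.1 x.2.2.2.2.2.2.1 x.2.2.2.2.2.2.2 * H x.2.1 x.2.2.1 * a x.1 x.2.2.2.2.2.1 * b x.2.2.2.2.1 x.2.2.2.2.2.2.1 * b x.2.2.2.2.2.2.2 x.2.2.2.1)) := by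
          refine Fintype.sum_equiv ⟨fun x => (x.2.1, x.1, x.2.2.2.2.2.1, x.2.2.2.2.2.2.1, x.2.2.2.2.2.2.2, x.2.2.1, x.2.2.2.1, x.2.2.2.2.1), fun x => (x.2.1, x.1, x.2.2.2.2.2.1, x.2.2.2.2.2.2.1, x.2.2.2.2.2.2.2, x.2.2.1, x.2.2.2.1, x.2.2.2.2.1), fun _ => rfl, fun _ => rfl⟩ _ _ ?_
          rintro ⟨i, j, m, n, k, p, q, l⟩
          simp only [Equiv.coe_fn_mk]
          rw [hb i j]; ring
      _ = (∑ i, ∑ j, ∑ m, ∑ n, ∑ k, ∑ p, ∑ q, ∑ l, b j i * (1 / 4 * (C m n k * C p q l * H j m * a i p * b k q * b l n))) := (flat8 (fun i j m n k p q l => b j i * (1 / 4 * (C m n k * C p q l * H j m * a i p * b k q * b l n)))).symm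
  have h2 : (∑ i, ∑ j, ∑ m, ∑ n, ∑ k, ∑ p, ∑ q, ∑ l, b j i * (1 / 4 * (C m n k * C p q l * a j m * a i p * b k q * Bd l n))) = (∑ i, ∑ j, ∑ m, ∑ n, ∑ k, ∑ p, ∑ q, ∑ l, b j i * (1 / 4 * (C m n k * C p q l * a j m * a i p * Bd k q * b l n))) := by
    calc (∑ i, ∑ j, ∑ m, ∑ n, ∑ k, ∑ p, ∑ q, ∑ l, b j i * (1 / 4 * (C m n k * C p q l * a j m * a i p * b k q * Bd l n)))
        = ∑ x : Fin 3 × Fin 3 × Fin 3 × Fin 3 × Fin 3 × Fin 3 × Fin 3 × Fin 3, b x.2.1 x.1 * (1 / 4 * (C x.2.2.1 x.2.2.2.1 x.2.2.2.2.1 * C x.2.2.2.2.2.1 x.2.2.2.2.2.2.1 x.2.2.2.2.2.2.2 * a x.2.1 x.2.2.1 * a x.1 x.2.2.2.2.2.1 * b x.2.2.2.2.1 x.2.2.2.2.2.2.1 * Bd x.2.2.2.2.2.2.2 x.2.2.2.1)) := flat8 _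
      _ = ∑ x : Fin 3 × Fin 3 × Fin 3 × Fin 3 × Fin 3 × Fin 3 × Fin 3 × Fin 3, b x.2.1 x.1 * (1 / 4 * (C x.2.2.1 x.2.2.2.1 x.2.2.2.2.1 * C x.2.2.2.2.2.1 x.2.2.2.2.2.2.1 x.2.2.2.2.2.2.2 * a x.2.1 x.2.2.1 * a x.1 x.2.2.2.2.2.1 * Bd x.2.2.2.2.1 x.2.2.2.2.2.2.1 * b x.2.2.2.2.2.2.2 x.2.2.2.1)) := by
          refine Fintype.sum_equiv ⟨fun x => (x.2.1, x.1, x.2.2.2.2.2.1, x.2.2.2.2.2.2.1, x.2.2.2.2.2.2.2, x.2.2.1, x.2.2.2.1, x.2.2.2.2.1), fun x => (x.2.1, x.1, x.2.2.2.2.2.1, x.2.2.2.2.2.2.1, x.2.2.2.2.2.2.2, x.2.2.1, x.2.2.2.1, x.2.2.2.2.1), fun _ => rfl, fun _ => rfl⟩ _ _ ?_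
          rintro ⟨i, j, m, n, k, p, q, l⟩
          simp only [Equiv.coe_fn_mk]
          rw [hb i j]; ring
      _ = (∑ i, ∑ j, ∑ m, ∑ n, ∑ k, ∑ p, ∑ q, ∑ l, b j i * (1 / 4 * (C m n k * C p q l * a j m * a i p * Bd k q * b l n))) := (flat8 (fun i j m n k p q l => b j i * (1 / 4 * (C m n k * C p q l * a j m * a i p * Bd k q * b l n)))).symm
  have hU1 : (∑ i, ∑ j, ∑ m, ∑ n, ∑ k, ∑ p, ∑ q, ∑ l, b j i * (1 / 4 * (C m n k * C p q l * H j m * a i p * b k q * b l n))) = (∑ j, ∑ m, ∑ n, ∑ k, ∑ q, ∑ l, 1 / 4 * (C m n k * C j q l * H j m * b k q * b l n)) := by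
    calc (∑ i, ∑ j, ∑ m, ∑ n, ∑ k, ∑ p, ∑ q, ∑ l, b j i * (1 / 4 * (C m n k * C p q l * H j m * a i p * b k q * b l n)))
        = ∑ x : Fin 3 × Fin 3 × Fin 3 × Fin 3 × Fin 3 × Fin 3 × Fin 3 × Fin 3, b x.2.1 x.1 * (1 / 4 * (C x.2.2.1 x.2.2.2.1 x.2.2.2.2.1 * C x.2.2.2.2.2.1 x.2.2.2.2.2.2.1 x.2.2.2.2.2.2.2 * H x.2.1 x.2.2.1 * a x.1 x.2.2.2.2.2.1 * b x.2.2.2.2.1 x.2.2.2.2.2.2.1 * b x.2.2.2.2.2.2.2 x.2.2.2.1)) := flat8 _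
      _ = ∑ x : Fin 3 × Fin 3 × Fin 3 × Fin 3 × Fin 3 × Fin 3 × Fin 3 × Fin 3, b x.1 x.2.2.2.2.2.2.2 * (1 / 4 * (C x.2.1 x.2.2.1 x.2.2.2.1 * C x.2.2.2.2.2.2.1 x.2.2.2.2.1 x.2.2.2.2.2.1 * H x.1 x.2.1 * a x.2.2.2.2.2.2.2 x.2.2.2.2.2.2.1 * b x.2.2.2.1 x.2.2.2.2.1 * b x.2.2.2.2.2.1 x.2.2.1)) := by
          refine Fintype.sum_equiv ⟨fun x => (x.2.1, x.2.2.1, x.2.2.2.1, x.2.2.2.2.1, x.2.2.2.2.2.2.1, x.2.2.2.2.2.2.2, x.2.2.2.2.2.1, x.1), fun x => (x.2.2.2.2.2.2.2, x.1, x.2.1, x.2.2.1, x.2.2.2.1, x.2.2.2.2.2.2.1, x.2.2.2.2.1, x.2.2.2.2.2.1), fun _ => rfl, fun _ => rfl⟩ _ _ ?_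
          rintro ⟨i, j, m, n, k, p, q, l⟩
          simp only [Equiv.coe_fn_mk]
      _ = ∑ j, ∑ m, ∑ n, ∑ k, ∑ q, ∑ l, ∑ p, ∑ i, b j i * (1 / 4 * (C m n k * C p q l * H j m * a i p * b k q * b l n)) := (flat8 (fun j m n k q l p i => b j i * (1 / 4 * (C m n k * C p q l * H j m * a i p * b k q * b l n)))).symm
      _ = (∑ j, ∑ m, ∑ n, ∑ k, ∑ q, ∑ l, 1 / 4 * (C m n k * C j q l * H j m * b k q * b l n)) := by
          apply sc; intro j; apply sc; intro m; apply sc; intro n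
          apply sc; intro k; apply sc; intro q; apply sc; intro l
          calc (∑ p, ∑ i, b j i * (1 / 4 * (C m n k * C p q l * H j m * a i p * b k q * b l n)))
              = ∑ p, ∑ i, b j i * a i p * (1 / 4 * (C m n k * C p q l * H j m * b k q * b l n)) := by
                apply sc; intro p; apply sc; intro i; ring
            _ = 1 / 4 * (C m n k * C j q l * H j m * b k q * b l n) := contract b a hba j _
  have hU3 : (∑ i, ∑ j, ∑ m, ∑ n, ∑ k, ∑ p, ∑ q, ∑ l, b j i * (1 / 4 * (C m n k * C p q l * a j m * a i p * Bd k q * b l n))) = (∑ j, ∑ m, ∑ n, ∑ k, ∑ q, ∑ l, 1 / 4 * (C m n k * C j q l * a j m * Bd k q * b l n)) := by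
    calc (∑ i, ∑ j, ∑ m, ∑ n, ∑ k, ∑ p, ∑ q, ∑ l, b j i * (1 / 4 * (C m n k * C p q l * a j m * a i p * Bd k q * b l n)))
        = ∑ x : Fin 3 × Fin 3 × Fin 3 × Fin 3 × Fin 3 × Fin 3 × Fin 3 × Fin 3, b x.2.1 x.1 * (1 / 4 * (C x.2.2.1 x.2.2.2.1 x.2.2.2.2.1 * C x.2.2.2.2.2.1 x.2.2.2.2.2.2.1 x.2.2.2.2.2.2.2 * a x.2.1 x.2.2.1 * a x.1 x.2.2.2.2.2.1 * Bd x.2.2.2.2.1 x.2.2.2.2.2.2.1 * b x.2.2.2.2.2.2.2 x.2.2.2.1)) := flat8 _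
      _ = ∑ x : Fin 3 × Fin 3 × Fin 3 × Fin 3 × Fin 3 × Fin 3 × Fin 3 × Fin 3, b x.1 x.2.2.2.2.2.2.2 * (1 / 4 * (C x.2.1 x.2.2.1 x.2.2.2.1 * C x.2.2.2.2.2.2.1 x.2.2.2.2.1 x.2.2.2.2.2.1 * a x.1 x.2.1 * a x.2.2.2.2.2.2.2 x.2.2.2.2.2.2.1 * Bd x.2.2.2.1 x.2.2.2.2.1 * b x.2.2.2.2.2.1 x.2.2.1)) := by
          refine Fintype.sum_equiv ⟨fun x => (x.2.1, x.2.2.1, x.2.2.2.1, x.2.2.2.2.1, x.2.2.2.2.2.2.1, x.2.2.2.2.2.2.2, x.2.2.2.2.2.1, x.1), fun x => (x.2.2.2.2.2.2.2, x.1, x.2.1, x.2.2.1, x.2.2.2.1, x.2.2.2.2.2.2.1, x.2.2.2.2.1, x.2.2.2.2.2.1), fun _ => rfl, fun _ => rfl⟩ _ _ ?_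
          rintro ⟨i, j, m, n, k, p, q, l⟩
          simp only [Equiv.coe_fn_mk]
      _ = ∑ j, ∑ m, ∑ n, ∑ k, ∑ q, ∑ l, ∑ p, ∑ i, b j i * (1 / 4 * (C m n k * C p q l * a j m * a i p * Bd k q * b l n)) := (flat8 (fun j m n k q l p i => b j i * (1 / 4 * (C m n k * C p q l * a j m * a i p * Bd k q * b l n)))).symm
      _ = (∑ j, ∑ m, ∑ n, ∑ k, ∑ q, ∑ l, 1 / 4 * (C m n k * C j q l * a j m * Bd k q * b l n)) := by
          apply sc; intro j; apply sc; intro m; apply sc; intro n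
          apply sc; intro k; apply sc; intro q; apply sc; intro l
          calc (∑ p, ∑ i, b j i * (1 / 4 * (C m n k * C p q l * a j m * a i p * Bd k q * b l n)))
              = ∑ p, ∑ i, b j i * a i p * (1 / 4 * (C m n k * C p q l * a j m * Bd k q * b l n)) := by
                apply sc; intro p; apply sc; intro i; ring
            _ = 1 / 4 * (C m n k * C j q l * a j m * Bd k q * b l n) := contract b a hba j _
  have h3 : (∑ i, ∑ j, ∑ m, ∑ n, ∑ k, ∑ p, ∑ q, ∑ l, b j i * (1 / 4 * (C m n k * C p q l * H j m * a i p * b k q * b l n))) + (∑ i, ∑ j, ∑ m, ∑ n, ∑ k, ∑ p, ∑ q, ∑ l, b j i * (1 / 4 * (C m n k * C p q l * H j m * a i p * b k q * b l n))) = (∑ i, ∑ j, ∑ l, ∑ k, ∑ m, ∑ n, b j i * (-(1 / 2) * (C l k i * (H l m * b k n * C m n j)))) := by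
    rw [hU1]
    calc (∑ j, ∑ m, ∑ n, ∑ k, ∑ q, ∑ l, 1 / 4 * (C m n k * C j q l * H j m * b k q * b l n)) + (∑ j, ∑ m, ∑ n, ∑ k, ∑ q, ∑ l, 1 / 4 * (C m n k * C j q l * H j m * b k q * b l n))
        = (∑ x : Fin 3 × Fin 3 × Fin 3 × Fin 3 × Fin 3 × Fin 3, 1 / 4 * (C x.2.1 x.2.2.1 x.2.2.2.1 * C x.1 x.2.2.2.2.1 x.2.2.2.2.2 * H x.1 x.2.1 * b x.2.2.2.1 x.2.2.2.2.1 * b x.2.2.2.2.2 x.2.2.1)) + (∑ x : Fin 3 × Fin 3 × Fin 3 × Fin 3 × Fin 3 × Fin 3, 1 / 4 * (C x.2.1 x.2.2.1 x.2.2.2.1 * C x.1 x.2.2.2.2.1 x.2.2.2.2.2 * H x.1 x.2.1 * b x.2.2.2.1 x.2.2.2.2.1 * b x.2.2.2.2.2 x.2.2.1)) := congrArg₂ (· + ·) (flat6 (fun j m n k q l => 1 / 4 * (C m n k * C j q l * H j m * b k q * b l n))) (flat6 (fun j m n k q l => 1 / 4 * (C m n k * C j q l * H j m * b k q * b l n)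))
      _ = ∑ x : Fin 3 × Fin 3 × Fin 3 × Fin 3 × Fin 3 × Fin 3, (1 / 4 * (C x.2.1 x.2.2.1 x.2.2.2.1 * C x.1 x.2.2.2.2.1 x.2.2.2.2.2 * H x.1 x.2.1 * b x.2.2.2.1 x.2.2.2.2.1 * b x.2.2.2.2.2 x.2.2.1) + 1 / 4 * (C x.2.1 x.2.2.1 x.2.2.2.1 * C x.1 x.2.2.2.2.1 x.2.2.2.2.2 * H x.1 x.2.1 * b x.2.2.2.1 x.2.2.2.2.1 * b x.2.2.2.2.2 x.2.2.1)) := by rw [← Finset.sum_add_distrib]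
      _ = ∑ x : Fin 3 × Fin 3 × Fin 3 × Fin 3 × Fin 3 × Fin 3, b x.2.1 x.1 * (-(1 / 2) * (C x.2.2.1 x.2.2.2.1 x.1 * (H x.2.2.1 x.2.2.2.2.1 * b x.2.2.2.1 x.2.2.2.2.2 * C x.2.2.2.2.1 x.2.2.2.2.2 x.2.1))) := by
          refine Fintype.sum_equiv ⟨fun x => (x.2.2.2.2.1, x.2.2.2.1, x.1, x.2.2.2.2.2, x.2.1, x.2.2.1), fun x => (x.2.2.1, x.2.2.2.2.1, x.2.2.2.2.2, x.2.1, x.1, x.2.2.2.1), fun _ => rfl, fun _ => rfl⟩ _ _ ?_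
          rintro ⟨j, m, n, k, q, l⟩
          simp only [Equiv.coe_fn_mk]
          rw [hC j l q, hb l n]; ring
      _ = (∑ i, ∑ j, ∑ l, ∑ k, ∑ m, ∑ n, b j i * (-(1 / 2) * (C l k i * (H l m * b k n * C m n j)))) := (flat6 (fun i j l k m n => b j i * (-(1 / 2) * (C l k i * (H l m * b k n * C m n j))))).symm
  have h4 : (∑ i, ∑ j, ∑ m, ∑ n, ∑ k, ∑ p, ∑ q, ∑ l, b j i * (1 / 4 * (C m n k * C p q l * a j m * a i p * Bd k q * b l n))) + (∑ i, ∑ j, ∑ m, ∑ n, ∑ k, ∑ p, ∑ q, ∑ l, b j i * (1 / 4 * (C m n k * C p q l * a j m * a i p * Bd k q * b l n))) = (∑ i, ∑ j, ∑ l, ∑ k, ∑ m, ∑ n, b j i * (-(1 / 2) * (C l k i * (a l m * Bd k n * C m n j)))) := by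
    rw [hU3]
    calc (∑ j, ∑ m, ∑ n, ∑ k, ∑ q, ∑ l, 1 / 4 * (C m n k * C j q l * a j m * Bd k q * b l n)) + (∑ j, ∑ m, ∑ n, ∑ k, ∑ q, ∑ l, 1 / 4 * (C m n k * C j q l * a j m * Bd k q * b l n))
        = (∑ x : Fin 3 × Fin 3 × Fin 3 × Fin 3 × Fin 3 × Fin 3, 1 / 4 * (C x.2.1 x.2.2.1 x.2.2.2.1 * C x.1 x.2.2.2.2.1 x.2.2.2.2.2 * a x.1 x.2.1 * Bd x.2.2.2.1 x.2.2.2.2.1 * b x.2.2.2.2.2 x.2.2.1)) + (∑ x : Fin 3 × Fin 3 × Fin 3 × Fin 3 × Fin 3 × Fin 3, 1 / 4 * (C x.2.1 x.2.2.1 x.2.2.2.1 * C x.1 x.2.2.2.2.1 x.2.2.2.2.2 * a x.1 x.2.1 * Bd x.2.2.2.1 x.2.2.2.2.1 * b x.2.2.2.2.2 x.2.2.1)) := congrArg₂ (· + ·) (flat6 (fun j m n k q l => 1 / 4 * (C m n k * C j q l * a j m * Bd k q * b l n))) (flat6 (fun j m n k q l => 1 / 4 * (C m n k * C j q l * a j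 m * Bd k q * b l n)))
      _ = ∑ x : Fin 3 × Fin 3 × Fin 3 × Fin 3 × Fin 3 × Fin 3, (1 / 4 * (C x.2.1 x.2.2.1 x.2.2.2.1 * C x.1 x.2.2.2.2.1 x.2.2.2.2.2 * a x.1 x.2.1 * Bd x.2.2.2.1 x.2.2.2.2.1 * b x.2.2.2.2.2 x.2.2.1) + 1 / 4 * (C x.2.1 x.2.2.1 x.2.2.2.1 * C x.1 x.2.2.2.2.1 x.2.2.2.2.2 * a x.1 x.2.1 * Bd x.2.2.2.1 x.2.2.2.2.1 * b x.2.2.2.2.2 x.2.2.1)) := by rw [← Finset.sum_add_distrib]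
      _ = ∑ x : Fin 3 × Fin 3 × Fin 3 × Fin 3 × Fin 3 × Fin 3, b x.2.1 x.1 * (-(1 / 2) * (C x.2.2.1 x.2.2.2.1 x.1 * (a x.2.2.1 x.2.2.2.2.1 * Bd x.2.2.2.1 x.2.2.2.2.2 * C x.2.2.2.2.1 x.2.2.2.2.2 x.2.1))) := by
          refine Fintype.sum_equiv ⟨fun x => (x.2.2.1, x.2.2.2.2.2, x.2.1, x.2.2.2.1, x.1, x.2.2.2.2.1), fun x => (x.2.2.2.2.1, x.2.2.1, x.1, x.2.2.2.1, x.2.2.2.2.2, x.2.1), fun _ => rfl, fun _ => rfl⟩ _ _ ?_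
          rintro ⟨j, m, n, k, q, l⟩
          simp only [Equiv.coe_fn_mk]
          rw [hC m k n, ha m j]; ring
      _ = (∑ i, ∑ j, ∑ l, ∑ k, ∑ m, ∑ n, b j i * (-(1 / 2) * (C l k i * (a l m * Bd k n * C m n j)))) := (flat6 (fun i j l k m n => b j i * (-(1 / 2) * (C l k i * (a l m * Bd k n * C m n j))))).symm
  simp (config := { maxSteps := 100000000 }) only [mul_sub, mul_add, add_mul, Finset.mul_sum,
    Finset.sum_add_distrib, Finset.sum_sub_distrib]
  linear_combination -h1 - h2 - h3 - h4

open Matrix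

/-- The Ricci tensor of a left-invariant metric on a 3-dimensional Lie group, in terms of
the structure constants `C` and the metric `g` (indices raised with `g⁻¹`). -/
noncomputable def Ricci (C : Fin 3 → Fin 3 → Fin 3 → ℝ) (g : Matrix (Fin 3) (Fin 3) ℝ)
    (i j : Fin 3) : ℝ :=
  -(1/2) * ∑ l, ∑ k, C l k i * (C k l j + ∑ m, ∑ n, g l m * g⁻¹ k n * C m n j)
  - (1/4) * ∑ m, ∑ n, ∑ k, ∑ p, ∑ q, ∑ l,
      C m n k * C p q l * g j m * g i p * g⁻¹ k q * g⁻¹ l n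

set_option maxHeartbeats 4000000 in
/-- The contraction `g^{ji} Ṙ_{ij}` vanishes. -/
theorem contraction_dot_Ricci_eq_zero
    (C : Fin 3 → Fin 3 → Fin 3 → ℝ) (hC : ∀ a b c, C a b c = -C a c b)
    (g : ℝ → Matrix (Fin 3) (Fin 3) ℝ)
    (hpos : ∀ t, (g t).PosDef) (hsymm : ∀ t, (g t).IsSymm)
    (hsmooth : ∀ i j, ContDiff ℝ (⊤ : ℕ∞) (fun t => g t i j))
    (k : ℝ → Matrix (Fin 3) (Fin 3) ℝ)
    (hk : ∀ t i j, deriv (fun s => g s i j) t = -2 * k t i j) :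
    ∀ t, ∑ i, ∑ j, (g t)⁻¹ j i * deriv (fun s => Ricci C (g s) i j) t = 0 := by
  intro t
  have hdent : ∀ i j, DifferentiableAt ℝ (fun s => g s i j) t :=
    fun i j => ((hsmooth i j).differentiable (by simp)).differentiableAt
  have hdet : ∀ s, (g s).det ≠ 0 := fun s => (hpos s).det_pos.ne'
  have hinvdiff : ∀ i j, DifferentiableAt ℝ (fun s => (g s)⁻¹ i j) t := by
    intro i j
    have heq : (fun s => (g s)⁻¹ i j) = fun s => ((g s).det)⁻¹ * (g s).adjugate i j := by
      funext s
      rw [Matrix.inv_def, Matrix.smul_apply, Ring.inverse_eq_inv', smul_eq_mul]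
    rw [heq]
    have hdd : DifferentiableAt ℝ (fun s => (g s).det) t := by
      have h2 : (fun s => (g s).det) = fun s =>
          g s 0 0 * g s 1 1 * g s 2 2 - g s 0 0 * g s 1 2 * g s 2 1 - g s 0 1 * g s 1 0 * g s 2 2 +
            g s 0 1 * g s 1 2 * g s 2 0 + g s 0 2 * g s 1 0 * g s 2 1 - g s 0 2 * g s 1 1 * g s 2 0 :=
        funext fun s => Matrix.det_fin_three (g s)
      rw [h2]; fun_prop
    refine (hdd.inv (hdet t)).mul ?_
    fin_cases i <;> fin_cases j <;> simp [Matrix.adjugate_fin_three] <;> fun_prop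
  have hg' : ∀ i j, HasDerivAt (fun s => g s i j) (deriv (fun s => g s i j) t) t :=
    fun i j => (hdent i j).hasDerivAt
  have hb' : ∀ i j, HasDerivAt (fun s => (g s)⁻¹ i j) (deriv (fun s => (g s)⁻¹ i j) t) t :=
    fun i j => (hinvdiff i j).hasDerivAt
  have hE : ∀ i j, HasDerivAt (fun s => Ricci C (g s) i j)
      (-(1/2) * (∑ l, ∑ k, C l k i * (∑ m, ∑ n, (deriv (fun s => g s l m) t * (g t)⁻¹ k n + g t l m * deriv (fun s => (g s)⁻¹ k n) t) * C m n j))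
          - 1/4 * (∑ m, ∑ n, ∑ k, ∑ p, ∑ q, ∑ l,
            ((((C m n k * C p q l * deriv (fun s => g s j m) t) * g t i p + (C m n k * C p q l * g t j m) * deriv (fun s => g s i p) t) * (g t)⁻¹ k q
              + (C m n k * C p q l * g t j m * g t i p) * deriv (fun s => (g s)⁻¹ k q) t) * (g t)⁻¹ l n
             + (C m n k * C p q l * g t j m * g t i p * (g t)⁻¹ k q) * deriv (fun s => (g s)⁻¹ l n) t))) t := by
    intro i j
    have h1 : HasDerivAt
        (fun s => -(1/2) * ∑ l, ∑ k, C l k i * (C k l j + ∑ m, ∑ n, g s l m * (g s)⁻¹ k n * C m n j))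
        (-(1/2) * ∑ l, ∑ k, C l k i * (∑ m, ∑ n, (deriv (fun s => g s l m) t * (g t)⁻¹ k n + g t l m * deriv (fun s => (g s)⁻¹ k n) t) * C m n j)) t :=
      HasDerivAt.const_mul _ (HasDerivAt.fun_sum fun l _ => HasDerivAt.fun_sum fun k _ =>
        HasDerivAt.const_mul _ (HasDerivAt.const_add _ (HasDerivAt.fun_sum fun m _ =>
          HasDerivAt.fun_sum fun n _ => ((hg' l m).fun_mul (hb' k n)).mul_const _)))
    have h2 : HasDerivAt
        (fun s => (1/4) * ∑ m, ∑ n, ∑ k, ∑ p, ∑ q, ∑ l,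
          C m n k * C p q l * g s j m * g s i p * (g s)⁻¹ k q * (g s)⁻¹ l n)
        ((1/4) * ∑ m, ∑ n, ∑ k, ∑ p, ∑ q, ∑ l,
            ((((C m n k * C p q l * deriv (fun s => g s j m) t) * g t i p + (C m n k * C p q l * g t j m) * deriv (fun s => g s i p) t) * (g t)⁻¹ k q
              + (C m n k * C p q l * g t j m * g t i p) * deriv (fun s => (g s)⁻¹ k q) t) * (g t)⁻¹ l n
             + (C m n k * C p q l * g t j m * g t i p * (g t)⁻¹ k q) * deriv (fun s => (g s)⁻¹ l n) t)) t :=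
      HasDerivAt.const_mul _ (HasDerivAt.fun_sum fun m _ => HasDerivAt.fun_sum fun n _ =>
        HasDerivAt.fun_sum fun k _ => HasDerivAt.fun_sum fun p _ => HasDerivAt.fun_sum fun q _ =>
        HasDerivAt.fun_sum fun l _ =>
          ((((hg' j m).const_mul (C m n k * C p q l)).fun_mul (hg' i p)).fun_mul (hb' k q)).fun_mul (hb' l n))
    exact h1.sub h2
  have hbsym : ((g t)⁻¹).IsSymm := by
    unfold Matrix.IsSymm
    rw [Matrix.transpose_nonsing_inv, (hsymm t).eq]
  have hb : ∀ p q, (g t)⁻¹ p q = (g t)⁻¹ q p := fun p q => hbsym.apply q p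
  have ha : ∀ p q, g t p q = g t q p := fun p q => (hsymm t).apply q p
  have hba : ∀ p q, (∑ x, (g t)⁻¹ p x * g t x q) = if p = q then (1:ℝ) else 0 := by
    intro p q
    have hmul : (g t)⁻¹ * g t = 1 := Matrix.nonsing_inv_mul (g t) (isUnit_iff_ne_zero.mpr (hdet t))
    have := congrFun (congrFun hmul p) q
    rwa [Matrix.mul_apply, Matrix.one_apply] at this
  calc (∑ i, ∑ j, (g t)⁻¹ j i * deriv (fun s => Ricci C (g s) i j) t)
      = ∑ i, ∑ j, (g t)⁻¹ j i *
          (-(1/2) * (∑ l, ∑ k, C l k i * (∑ m, ∑ n, (deriv (fun s => g s l m) t * (g t)⁻¹ k n + g t l m * deriv (fun s => (g s)⁻¹ k n) t) * C m n j))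
          - 1/4 * (∑ m, ∑ n, ∑ k, ∑ p, ∑ q, ∑ l,
            ((((C m n k * C p q l * deriv (fun s => g s j m) t) * g t i p + (C m n k * C p q l * g t j m) * deriv (fun s => g s i p) t) * (g t)⁻¹ k q
              + (C m n k * C p q l * g t j m * g t i p) * deriv (fun s => (g s)⁻¹ k q) t) * (g t)⁻¹ l n
             + (C m n k * C p q l * g t j m * g t i p * (g t)⁻¹ k q) * deriv (fun s => (g s)⁻¹ l n) t))) := by
        apply sc; intro i; apply sc; intro j; rw [(hE i j).deriv]
    _ = 0 := core_alg C (g t) (g t)⁻¹ (fun p q => deriv (fun s => g s p q) t)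
          (fun p q => deriv (fun s => (g s)⁻¹ p q) t) hC hb ha hba
end

section
/- With the hypotheses of the previous statement, the Ricci scalar R = g^{ij}R_{ij} satisfies Ṙ = 2 R^i_j k^j_i, where R^i_j = g^{ik}R_{kj}. -/
open Matrix

namespace RicciAux

open Finset

abbrev T := Fin 3
abbrev T4 := T × T × T × T
abbrev T6 := T × T × T × T × T × T
abbrev T8 := T × T × T × T × T × T × T × T

variable (C : T → T → T → ℝ)

noncomputable def Ms (i j : T) : ℝ := ∑ l, ∑ k, C l k i * C k l j

noncomputable def Ys (Q : Matrix T T ℝ) : ℝ := ∑ i, ∑ j, Q i j * Ms C i j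

noncomputable def X3 (U V W : Matrix T T ℝ) : ℝ :=
  ∑ x : T6, match x with
  | (a, b, c, d, e, f) => U a b * V c e * W d f * C a c d * C b e f

noncomputable def X3b (U V W : Matrix T T ℝ) : ℝ :=
  ∑ x : T6, match x with
  | (a, b, c, d, e, f) => U a b * V d e * W f c * C a c d * C b e f

lemma Ys_smul (r : ℝ) (Q : Matrix T T ℝ) : Ys C (fun i j => r * Q i j) = r * Ys C Q := by
  simp only [Ys, Finset.mul_sum]
  exact Finset.sum_congr rfl fun i _ => Finset.sum_congr rfl fun j _ => by ring

lemma Ys_congr {Q Q' : Matrix T T ℝ} (h : ∀ i j, Q i j = Q' i j) : Ys C Q = Ys C Q' := by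
  simp only [Ys, h]

lemma X3_smul1 (r : ℝ) (U V W : Matrix T T ℝ) :
    X3 C (fun i j => r * U i j) V W = r * X3 C U V W := by
  simp only [X3, Finset.mul_sum]
  exact Finset.sum_congr rfl fun ⟨a, b, c, d, e, f⟩ _ => by ring

lemma X3_smul2 (r : ℝ) (U V W : Matrix T T ℝ) :
    X3 C U (fun i j => r * V i j) W = r * X3 C U V W := by
  simp only [X3, Finset.mul_sum]
  exact Finset.sum_congr rfl fun ⟨a, b, c, d, e, f⟩ _ => by ring

lemma X3_smul3 (r : ℝ) (U V W : Matrix T T ℝ) :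
    X3 C U V (fun i j => r * W i j) = r * X3 C U V W := by
  simp only [X3, Finset.mul_sum]
  exact Finset.sum_congr rfl fun ⟨a, b, c, d, e, f⟩ _ => by ring

lemma X3_congr2 {V V' : Matrix T T ℝ} (h : ∀ i j, V i j = V' i j) (U W : Matrix T T ℝ) :
    X3 C U V W = X3 C U V' W := by
  simp only [X3, h]

lemma X3_congr3 {W W' : Matrix T T ℝ} (h : ∀ i j, W i j = W' i j) (U V : Matrix T T ℝ) :
    X3 C U V W = X3 C U V W' := by
  simp only [X3, h]

lemma X3b_congr1 {U U' : Matrix T T ℝ} (h : ∀ i j, U i j = U' i j) (V W : Matrix T T ℝ) :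
    X3b C U V W = X3b C U' V W := by
  simp only [X3b, h]

/-- relabel `c ↔ d`, `e ↔ f` (the two sign flips cancel). -/
def e_swap : T6 ≃ T6 :=
  ⟨fun ⟨a, b, c, d, e, f⟩ => ⟨a, b, d, c, f, e⟩, fun ⟨a, b, c, d, e, f⟩ => ⟨a, b, d, c, f, e⟩,
    fun ⟨_, _, _, _, _, _⟩ => rfl, fun ⟨_, _, _, _, _, _⟩ => rfl⟩

lemma X3_swap (hC : ∀ a b c, C a b c = -C a c b) (U V W : Matrix T T ℝ) :
    X3 C U V W = X3 C U W V := by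
  rw [X3, X3]
  refine Fintype.sum_equiv e_swap _ _ ?_
  rintro ⟨a, b, c, d, e, f⟩
  show U a b * V c e * W d f * C a c d * C b e f
      = U a b * W d f * V c e * C a d c * C b f e
  rw [hC a d c, hC b f e]; ring

/-- relabel `e ↔ f` only (one sign flip). -/
def e_ef : T6 ≃ T6 :=
  ⟨fun ⟨a, b, c, d, e, f⟩ => ⟨a, b, c, d, f, e⟩, fun ⟨a, b, c, d, e, f⟩ => ⟨a, b, c, d, f, e⟩,
    fun ⟨_, _, _, _, _, _⟩ => rfl, fun ⟨_, _, _, _, _, _⟩ => rfl⟩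

lemma X3b_neg (hC : ∀ a b c, C a b c = -C a c b) (U V W : Matrix T T ℝ)
    (hW : ∀ i j, W i j = W j i) : X3b C U V W = -X3 C U W V := by
  rw [X3b, X3, ← Finset.sum_neg_distrib]
  refine Fintype.sum_equiv e_ef _ _ ?_
  rintro ⟨a, b, c, d, e, f⟩
  show U a b * V d e * W f c * C a c d * C b e f
      = -(U a b * W c f * V d e * C a c d * C b f e)
  rw [hC b f e, hW f c]; ring

def e3 : T6 ≃ T6 :=
  ⟨fun ⟨i, j, l, k, m, n⟩ => ⟨l, m, k, i, n, j⟩, fun ⟨a, b, c, d, e, f⟩ => ⟨d, f, a, c, b, e⟩,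
    fun ⟨_, _, _, _, _, _⟩ => rfl, fun ⟨_, _, _, _, _, _⟩ => rfl⟩

lemma step3 (G : Matrix T T ℝ) (Q : Matrix T T ℝ) :
    (∑ i, ∑ j, Q i j * (∑ l, ∑ k, C l k i * (∑ m, ∑ n, G l m * G⁻¹ k n * C m n j)))
    = X3 C G G⁻¹ Q := by
  have h : (∑ i, ∑ j, Q i j * (∑ l, ∑ k, C l k i * (∑ m, ∑ n, G l m * G⁻¹ k n * C m n j)))
      = ∑ x : T6, match x with
        | (i, j, l, k, m, n) => Q i j * (C l k i * (G l m * G⁻¹ k n * C m n j)) := by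
    simp only [Fintype.sum_prod_type, Finset.mul_sum]
  rw [h, X3]
  refine Fintype.sum_equiv e3 _ _ ?_
  rintro ⟨i, j, l, k, m, n⟩
  simp only [e3, Equiv.coe_fn_mk]
  ring

def e4 : T8 ≃ T8 :=
  ⟨fun ⟨i, j, m, n, kk, p, q, l⟩ => ⟨m, p, n, kk, q, l, i, j⟩,
    fun ⟨a, b, c, d, e, f, i, j⟩ => ⟨i, j, a, c, d, b, e, f⟩,
    fun ⟨_, _, _, _, _, _, _, _⟩ => rfl, fun ⟨_, _, _, _, _, _, _, _⟩ => rfl⟩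

lemma step4 (G : Matrix T T ℝ) (Q : Matrix T T ℝ) :
    (∑ i, ∑ j, Q i j * (∑ m, ∑ n, ∑ k, ∑ p, ∑ q, ∑ l,
        C m n k * C p q l * G j m * G i p * G⁻¹ k q * G⁻¹ l n))
    = X3b C (fun a b => ∑ i, ∑ j, G i b * Q i j * G j a) G⁻¹ G⁻¹ := by
  have h1 : (∑ i, ∑ j, Q i j * (∑ m, ∑ n, ∑ k, ∑ p, ∑ q, ∑ l,
        C m n k * C p q l * G j m * G i p * G⁻¹ k q * G⁻¹ l n))
      = ∑ x : T8, match x with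
        | (i, j, m, n, kk, p, q, l) =>
            Q i j * (C m n kk * C p q l * G j m * G i p * G⁻¹ kk q * G⁻¹ l n) := by
    simp only [Fintype.sum_prod_type, Finset.mul_sum]
  have h2 : X3b C (fun a b => ∑ i, ∑ j, G i b * Q i j * G j a) G⁻¹ G⁻¹
      = ∑ x : T8, match x with
        | (a, b, c, d, e, f, i, j) =>
            G i b * Q i j * G j a * (G⁻¹ d e * (G⁻¹ f c * (C a c d * C b e f))) := by
    simp only [X3b, Fintype.sum_prod_type, Finset.sum_mul, Finset.mul_sum, mul_assoc]
  rw [h1, h2]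
  refine Fintype.sum_equiv e4 _ _ ?_
  rintro ⟨i, j, m, n, kk, p, q, l⟩
  simp only [e4, Equiv.coe_fn_mk]
  ring

/-- Contraction of the Ricci tensor with an arbitrary matrix `Q`. -/
lemma contract (G : Matrix T T ℝ) (Q : Matrix T T ℝ) :
    (∑ i, ∑ j, Q i j * Ricci C G i j)
    = -(1/2) * Ys C Q - (1/2) * X3 C G G⁻¹ Q
      - (1/4) * X3b C (fun a b => ∑ i, ∑ j, G i b * Q i j * G j a) G⁻¹ G⁻¹ := by
  have hsplit : ∀ i j, Q i j * Ricci C G i j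
      = -(1/2) * (Q i j * Ms C i j)
        + (-(1/2)) * (Q i j * (∑ l, ∑ k, C l k i * (∑ m, ∑ n, G l m * G⁻¹ k n * C m n j)))
        + (-(1/4)) * (Q i j * (∑ m, ∑ n, ∑ k, ∑ p, ∑ q, ∑ l,
            C m n k * C p q l * G j m * G i p * G⁻¹ k q * G⁻¹ l n)) := by
    intro i j
    have hin : (∑ l, ∑ k, C l k i * (C k l j + ∑ m, ∑ n, G l m * G⁻¹ k n * C m n j))
        = Ms C i j + ∑ l, ∑ k, C l k i * (∑ m, ∑ n, G l m * G⁻¹ k n * C m n j) := by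
      simp only [Ms, mul_add, Finset.sum_add_distrib]
    rw [Ricci, hin]; ring
  simp only [hsplit, Finset.sum_add_distrib, ← Finset.mul_sum]
  rw [step3, step4]
  have hY : (∑ i, ∑ j, Q i j * Ms C i j) = Ys C Q := rfl
  rw [hY]; ring

def e5 : T4 ≃ T4 :=
  ⟨fun ⟨i, j, l, m⟩ => ⟨m, j, i, l⟩, fun ⟨m, j, i, l⟩ => ⟨i, j, l, m⟩,
    fun ⟨_, _, _, _⟩ => rfl, fun ⟨_, _, _, _⟩ => rfl⟩

/-- Rearranging the right-hand side `2 R^i_j k^j_i` into a contraction of `Ricci`. -/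
lemma rhs_rearrange (H K R : Matrix T T ℝ) :
    (∑ i, ∑ j, (∑ m, H i m * R m j) * (∑ l, H j l * K l i))
    = ∑ m, ∑ j, (∑ i, ∑ l, H i m * K l i * H j l) * R m j := by
  have h1 : (∑ i, ∑ j, (∑ m, H i m * R m j) * (∑ l, H j l * K l i))
      = ∑ x : T4, match x with
        | (i, j, l, m) => H i m * (R m j * (H j l * K l i)) := by
    simp only [Fintype.sum_prod_type, Finset.sum_mul_sum, Finset.mul_sum, Finset.sum_mul,
      mul_assoc]
  have h2 : (∑ m, ∑ j, (∑ i, ∑ l, H i m * K l i * H j l) * R m j)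
      = ∑ x : T4, match x with
        | (m, j, i, l) => H i m * (K l i * (H j l * R m j)) := by
    simp only [Fintype.sum_prod_type, Finset.sum_mul, mul_assoc]
  rw [h1, h2]
  refine Fintype.sum_equiv e5 _ _ ?_
  rintro ⟨i, j, m, l⟩
  simp only [e5, Equiv.coe_fn_mk]
  ring

def e6 : T4 ≃ T4 :=
  ⟨fun ⟨i, j, m, l⟩ => ⟨m, l, j, i⟩, fun ⟨m, l, j, i⟩ => ⟨i, j, m, l⟩,
    fun ⟨_, _, _, _⟩ => rfl, fun ⟨_, _, _, _⟩ => rfl⟩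

lemma r3_rearrange (G H K : Matrix T T ℝ) (a b : T) :
    (∑ i, ∑ j, G i b * (∑ m, ∑ l, H m i * K l m * H j l) * G j a)
    = ∑ m, ∑ l, (∑ i, H m i * G i b) * (K l m * (∑ j, H j l * G j a)) := by
  have h1 : (∑ i, ∑ j, G i b * (∑ m, ∑ l, H m i * K l m * H j l) * G j a)
      = ∑ x : T4, match x with
        | (i, j, m, l) => G i b * (H m i * (K l m * (H j l * G j a))) := by
    simp only [Fintype.sum_prod_type, Finset.sum_mul, Finset.mul_sum, mul_assoc]
  have h2 : (∑ m, ∑ l, (∑ i, H m i * G i b) * (K l m * (∑ j, H j l * G j a)))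
      = ∑ x : T4, match x with
        | (m, l, j, i) => H m i * (G i b * (K l m * (H j l * G j a))) := by
    simp only [Fintype.sum_prod_type, Finset.sum_mul, Finset.mul_sum, mul_assoc]
  rw [h1, h2]
  refine Fintype.sum_equiv e6 _ _ ?_
  rintro ⟨i, j, m, l⟩
  simp only [e6, Equiv.coe_fn_mk]
  ring

end RicciAux

open RicciAux Finset in
/-- Evolution of the Ricci scalar: `Ṙ = 2 R^i_j k^j_i`. -/
theorem deriv_Ricci_scalar
    (C : Fin 3 → Fin 3 → Fin 3 → ℝ) (hC : ∀ a b c, C a b c = -C a c b)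
    (g : ℝ → Matrix (Fin 3) (Fin 3) ℝ)
    (hpos : ∀ t, (g t).PosDef) (hsymm : ∀ t, (g t).IsSymm)
    (hsmooth : ∀ i j, ContDiff ℝ (⊤ : ℕ∞) (fun t => g t i j))
    (k : ℝ → Matrix (Fin 3) (Fin 3) ℝ)
    (hk : ∀ t i j, deriv (fun s => g s i j) t = -2 * k t i j) :
    ∀ t, deriv (fun s => ∑ i, ∑ j, (g s)⁻¹ i j * Ricci C (g s) i j) t =
      2 * ∑ i, ∑ j, (∑ m, (g t)⁻¹ i m * Ricci C (g t) m j) *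
        (∑ l, (g t)⁻¹ j l * k t l i) := by
  intro t
  -- basic facts
  have hdetne : ∀ s, (g s).det ≠ 0 := fun s => (hpos s).det_pos.ne'
  have hdetu : ∀ s, IsUnit (g s).det := fun s => isUnit_iff_ne_zero.mpr (hdetne s)
  have hGsym : ∀ s i j, g s i j = g s j i := fun s i j => (hsymm s).apply j i
  have hHsym : ∀ s i j, (g s)⁻¹ i j = (g s)⁻¹ j i := by
    intro s i j
    have h : ((g s)⁻¹)ᵀ = (g s)⁻¹ := by
      rw [Matrix.transpose_nonsing_inv, (hsymm s).eq]
    have := congrFun (congrFun h j) i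
    rwa [Matrix.transpose_apply] at this
  have hKsym : ∀ i j, k t i j = k t j i := by
    intro i j
    have h1 : deriv (fun s => g s i j) t = deriv (fun s => g s j i) t := by
      congr 1; funext s; exact hGsym s i j
    rw [hk t i j, hk t j i] at h1; linarith
  have hHG : ∀ s i j, (∑ c, (g s)⁻¹ i c * g s c j) = if i = j then (1:ℝ) else 0 := by
    intro s i j
    have h1 := congrFun (congrFun (Matrix.nonsing_inv_mul (g s) (hdetu s)) i) j
    simpa [Matrix.mul_apply, Matrix.one_apply] using h1
  have hGH : ∀ s i j, (∑ c, g s i c * (g s)⁻¹ c j) = if i = j then (1:ℝ) else 0 := by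
    intro s i j
    have h1 := congrFun (congrFun (Matrix.mul_nonsing_inv (g s) (hdetu s)) i) j
    simpa [Matrix.mul_apply, Matrix.one_apply] using h1
  -- differentiability
  have hdiffg : ∀ i j s, DifferentiableAt ℝ (fun u => g u i j) s := fun i j s =>
    ((hsmooth i j).differentiable (by simp)).differentiableAt
  have hgd : ∀ i j, HasDerivAt (fun s => g s i j) (-2 * k t i j) t := by
    intro i j
    have h := (hdiffg i j t).hasDerivAt
    rwa [hk t i j] at h
  have hdetdiff : ∀ s, DifferentiableAt ℝ (fun u => (g u).det) s := by
    intro s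
    have heq : (fun u => (g u).det) = fun u =>
        g u 0 0 * g u 1 1 * g u 2 2 - g u 0 0 * g u 1 2 * g u 2 1
          - g u 0 1 * g u 1 0 * g u 2 2 + g u 0 1 * g u 1 2 * g u 2 0
          + g u 0 2 * g u 1 0 * g u 2 1 - g u 0 2 * g u 1 1 * g u 2 0 :=
      funext fun u => Matrix.det_fin_three (g u)
    rw [heq]
    exact (((((((hdiffg 0 0 s).mul (hdiffg 1 1 s)).mul (hdiffg 2 2 s)).sub
      (((hdiffg 0 0 s).mul (hdiffg 1 2 s)).mul (hdiffg 2 1 s))).sub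
      (((hdiffg 0 1 s).mul (hdiffg 1 0 s)).mul (hdiffg 2 2 s))).add
      (((hdiffg 0 1 s).mul (hdiffg 1 2 s)).mul (hdiffg 2 0 s))).add
      (((hdiffg 0 2 s).mul (hdiffg 1 0 s)).mul (hdiffg 2 1 s))).sub
      (((hdiffg 0 2 s).mul (hdiffg 1 1 s)).mul (hdiffg 2 0 s))
  have hadjdiff : ∀ i j s, DifferentiableAt ℝ (fun u => (g u).adjugate i j) s := by
    intro i j s
    fin_cases i <;> fin_cases j <;>
      simp only [Matrix.adjugate_fin_three, Matrix.cons_val', Matrix.cons_val_zero,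
        Matrix.cons_val_one, Matrix.head_cons, Matrix.empty_val', Matrix.cons_val_fin_one,
        Matrix.head_fin_const, Fin.isValue] <;>
      first
        | exact ((hdiffg _ _ s).mul (hdiffg _ _ s)).sub ((hdiffg _ _ s).mul (hdiffg _ _ s))
        | exact (((hdiffg _ _ s).mul (hdiffg _ _ s)).neg).add ((hdiffg _ _ s).mul (hdiffg _ _ s))
  have hinvdiff : ∀ i j s, DifferentiableAt ℝ (fun u => (g u)⁻¹ i j) s := by
    intro i j s
    have heq : (fun u => (g u)⁻¹ i j) = fun u => ((g u).det)⁻¹ * (g u).adjugate i j := by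
      funext u
      rw [Matrix.inv_def]
      simp [Matrix.smul_apply, smul_eq_mul, Ring.inverse_eq_inv']
    rw [heq]
    exact ((hdetdiff s).inv (hdetne s)).mul (hadjdiff i j s)
  -- the derivative of the inverse metric
  set aD : Matrix (Fin 3) (Fin 3) ℝ := fun i j => deriv (fun s => (g s)⁻¹ i j) t with haDdef
  have hA : ∀ i j, HasDerivAt (fun s => (g s)⁻¹ i j) (aD i j) t := fun i j =>
    (hinvdiff i j t).hasDerivAt
  have hrow : ∀ i j, (∑ c, (aD i c * g t c j + (g t)⁻¹ i c * (-2 * k t c j))) = 0 := by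
    intro i j
    have h1 : HasDerivAt (fun s => ∑ c, (g s)⁻¹ i c * g s c j)
        (∑ c, (aD i c * g t c j + (g t)⁻¹ i c * (-2 * k t c j))) t :=
      HasDerivAt.fun_sum fun c _ => (hA i c).mul (hgd c j)
    have h2 : HasDerivAt (fun s => ∑ c, (g s)⁻¹ i c * g s c j) 0 t :=
      (hasDerivAt_const t (if i = j then (1:ℝ) else 0)).congr_of_eventuallyEq
        (Filter.Eventually.of_forall fun s => hHG s i j)
    exact h1.unique h2
  have haDeq : ∀ i j, aD i j = 2 * ∑ b, ∑ c, (g t)⁻¹ i c * k t c b * (g t)⁻¹ b j := by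
    intro i j
    have hsplit : ∀ b, (∑ c, aD i c * g t c b) = 2 * ∑ c, (g t)⁻¹ i c * k t c b := by
      intro b
      have h := hrow i b
      rw [Finset.sum_add_distrib] at h
      have h2 : (∑ c, (g t)⁻¹ i c * (-2 * k t c b))
          = -2 * ∑ c, (g t)⁻¹ i c * k t c b := by
        rw [Finset.mul_sum]; exact Finset.sum_congr rfl fun c _ => by ring
      rw [h2] at h; linarith
    calc aD i j = ∑ c, aD i c * (if c = j then (1:ℝ) else 0) := by simp
      _ = ∑ c, aD i c * (∑ b, g t c b * (g t)⁻¹ b j) := by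
          refine Finset.sum_congr rfl fun c _ => ?_; rw [hGH t c j]
      _ = ∑ b, (∑ c, aD i c * g t c b) * (g t)⁻¹ b j := by
          simp only [Finset.mul_sum]; rw [Finset.sum_comm]
          simp only [Finset.sum_mul]
          exact Finset.sum_congr rfl fun b _ => Finset.sum_congr rfl fun c _ => by ring
      _ = ∑ b, (2 * ∑ c, (g t)⁻¹ i c * k t c b) * (g t)⁻¹ b j := by simp only [hsplit]
      _ = 2 * ∑ b, ∑ c, (g t)⁻¹ i c * k t c b * (g t)⁻¹ b j := by
          rw [Finset.mul_sum]
          refine Finset.sum_congr rfl fun b _ => ?_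
          rw [mul_assoc, Finset.sum_mul]
  -- relation lemma R2 : G (G⁻¹) G contracted gives back G
  have hR2 : ∀ s a b, (∑ i, ∑ j, g s i b * (g s)⁻¹ i j * g s j a) = g s a b := by
    intro s a b
    calc (∑ i, ∑ j, g s i b * (g s)⁻¹ i j * g s j a)
        = ∑ j, (∑ i, (g s)⁻¹ j i * g s i b) * g s j a := by
          rw [Finset.sum_comm]
          simp only [Finset.sum_mul]
          exact Finset.sum_congr rfl fun j _ => Finset.sum_congr rfl fun i _ => by
            rw [hHsym s i j]; ring
      _ = ∑ j, (if j = b then (1:ℝ) else 0) * g s j a := by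
          refine Finset.sum_congr rfl fun j _ => ?_; rw [hHG s j b]
      _ = g s b a := by simp
      _ = g s a b := hGsym s b a
  -- relation lemma R3 : G P G contracted gives k
  have hR3 : ∀ a b, (∑ i, ∑ j, g t i b *
      (∑ m, ∑ l, (g t)⁻¹ m i * k t l m * (g t)⁻¹ j l) * g t j a) = k t a b := by
    intro a b
    rw [r3_rearrange]
    have h2 : ∀ l, (∑ j, (g t)⁻¹ j l * g t j a) = if l = a then (1:ℝ) else 0 := by
      intro l
      have : (∑ j, (g t)⁻¹ j l * g t j a) = ∑ j, (g t)⁻¹ l j * g t j a :=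
        Finset.sum_congr rfl fun j _ => by rw [hHsym t j l]
      rw [this, hHG t l a]
    simp only [hHG, h2]
    simp
  -- pointwise simplification of the scalar function
  have hfun : (fun s => ∑ i, ∑ j, (g s)⁻¹ i j * Ricci C (g s) i j)
      = fun s => -(1/2) * Ys C (g s)⁻¹ - (1/4) * X3 C (g s) (g s)⁻¹ (g s)⁻¹ := by
    funext s
    rw [contract C (g s) ((g s)⁻¹)]
    rw [X3b_congr1 C (hR2 s) (g s)⁻¹ (g s)⁻¹]
    rw [X3b_neg C hC (g s) (g s)⁻¹ (g s)⁻¹ (hHsym s)]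
    rw [X3_swap C hC (g s) (g s)⁻¹ (g s)⁻¹]
    ring
  rw [hfun]
  -- derivative of the simplified function
  have hYd : HasDerivAt (fun s => Ys C (g s)⁻¹) (Ys C aD) t :=
    HasDerivAt.fun_sum fun i _ => HasDerivAt.fun_sum fun j _ => (hA i j).mul_const (Ms C i j)
  have hXd : HasDerivAt (fun s => X3 C (g s) (g s)⁻¹ (g s)⁻¹)
      (∑ x : T6, match x with
        | (a, b, c, d, e, f) =>
          (((-2 * k t a b) * (g t)⁻¹ c e + g t a b * aD c e) * (g t)⁻¹ d f
            + g t a b * (g t)⁻¹ c e * aD d f) * C a c d * C b e f) t := by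
    refine HasDerivAt.fun_sum fun x _ => ?_
    obtain ⟨a, b, c, d, e, f⟩ := x
    exact ((((hgd a b).mul (hA c e)).mul (hA d f)).mul_const (C a c d)).mul_const (C b e f)
  have hF : HasDerivAt
      (fun s => -(1/2) * Ys C (g s)⁻¹ - (1/4) * X3 C (g s) (g s)⁻¹ (g s)⁻¹)
      (-(1/2) * Ys C aD - (1/4) * (∑ x : T6, match x with
        | (a, b, c, d, e, f) =>
          (((-2 * k t a b) * (g t)⁻¹ c e + g t a b * aD c e) * (g t)⁻¹ d f
            + g t a b * (g t)⁻¹ c e * aD d f) * C a c d * C b e f)) t :=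
    (hYd.const_mul _).sub (hXd.const_mul _)
  rw [hF.deriv]
  -- split the raw derivative of X3 into three multilinear pieces
  have hXDraw : (∑ x : T6, match x with
        | (a, b, c, d, e, f) =>
          (((-2 * k t a b) * (g t)⁻¹ c e + g t a b * aD c e) * (g t)⁻¹ d f
            + g t a b * (g t)⁻¹ c e * aD d f) * C a c d * C b e f)
      = X3 C (fun i j => -2 * k t i j) (g t)⁻¹ (g t)⁻¹
        + X3 C (g t) aD (g t)⁻¹ + X3 C (g t) (g t)⁻¹ aD := by
    unfold X3
    rw [← Finset.sum_add_distrib, ← Finset.sum_add_distrib]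
    exact Finset.sum_congr rfl (by rintro ⟨a, b, c, d, e, f⟩ _; ring)
  rw [hXDraw]
  -- identify the derivative of the inverse metric with `2 P`
  have hP2P : ∀ i j, (2:ℝ) * ∑ b, ∑ c, (g t)⁻¹ i c * k t c b * (g t)⁻¹ b j
      = 2 * ∑ m, ∑ l, (g t)⁻¹ m i * k t l m * (g t)⁻¹ j l := by
    intro i j
    congr 1
    rw [Finset.sum_comm]
    refine Finset.sum_congr rfl fun a _ => Finset.sum_congr rfl fun l _ => ?_
    rw [hHsym t i a, hKsym a l, hHsym t l j]
  have haDP : ∀ i j, aD i j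
      = 2 * ∑ m, ∑ l, (g t)⁻¹ m i * k t l m * (g t)⁻¹ j l :=
    fun i j => (haDeq i j).trans (hP2P i j)
  -- rewrite the right-hand side as a contraction of the Ricci tensor
  rw [rhs_rearrange ((g t)⁻¹) (k t) (Ricci C (g t))]
  rw [contract C (g t) (fun m j => ∑ i, ∑ l, (g t)⁻¹ i m * k t l i * (g t)⁻¹ j l)]
  rw [X3b_congr1 C hR3 (g t)⁻¹ (g t)⁻¹]
  rw [X3b_neg C hC (k t) (g t)⁻¹ (g t)⁻¹ (hHsym t)]
  -- rewrite the left-hand side pieces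
  rw [Ys_congr C haDP, Ys_smul C 2 (fun i j => ∑ m, ∑ l, (g t)⁻¹ m i * k t l m * (g t)⁻¹ j l)]
  rw [X3_congr2 C haDP (g t) (g t)⁻¹, X3_smul2 C 2 (g t) (fun i j => ∑ m, ∑ l, (g t)⁻¹ m i * k t l m * (g t)⁻¹ j l) (g t)⁻¹]
  rw [X3_congr3 C haDP (g t) (g t)⁻¹, X3_smul3 C 2 (g t) (g t)⁻¹ (fun i j => ∑ m, ∑ l, (g t)⁻¹ m i * k t l m * (g t)⁻¹ j l)]
  rw [X3_smul1 C (-2) (k t) (g t)⁻¹ (g t)⁻¹]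
  rw [X3_swap C hC (g t) (fun i j => ∑ m, ∑ l, (g t)⁻¹ m i * k t l m * (g t)⁻¹ j l) (g t)⁻¹]
  ring
end
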